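/- arXiv:2510.14674 — 3 statements merged into one kernel-verified Lean document; each statement's English description precedes it below -/
import Mathlib

section
/- For every integer t ≥ 4, every n-vertex graph containing no path on t vertices as a subgraph has at most ((t−2)/2)·n edges. -/
/-!
Write `e₂(S)` for the number of ordered adjacent pairs inside `S` (`G.interedges S S`, twice the
number of edges of `G[S]`); we show `e₂(S) ≤ (t - 2) |S|` by strong induction on `S`.
If some vertex has at most `(t - 2) / 2` neighbours in `S`, delete it. Otherwise take a longest
path `P` in `G[S]`: it has `k < t` vertices and every neighbour of an endpoint lies on `P`. The two
endpoint degrees add up to at least `k`, so by pigeonhole some consecutive `u, u'` on `P` have `u`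
adjacent to the last vertex and `u'` adjacent to the first; then `P` closes into a cycle, and an
edge from it to the rest of `S` would give a longer path. So `V(P)` is isolated in `G[S]`, it
contributes at most `k (k - 1) ≤ (t - 2) k`, and induction handles `S \ V(P)`.
-/

open Finset

/-- `Contains G F` means `G` has a subgraph isomorphic to `F` (a copy of `F`),
i.e. there is an injective graph homomorphism from `F` to `G`. -/
def Contains {α β : Type*} (G : SimpleGraph α) (F : SimpleGraph β) : Prop :=
  ∃ f : β → α, Function.Injective f ∧ ∀ u v : β, F.Adj u v → G.Adj (f u) (f v)

namespace List
variable {α : Type*}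

theorem exists_eq_append_cons_cons_of_length_tail_lt [DecidableEq α] {X Y : Finset α} :
    ∀ {l : List α}, (∀ x ∈ X, x ∈ l.tail) → (∀ y ∈ Y, y ∈ l.dropLast) →
      l.tail.length < #X + #Y → ∃ s u u' r, l = s ++ u :: u' :: r ∧ u ∈ Y ∧ u' ∈ X
  | [], hX, hY, h | [_], hX, hY, h => by
    rw [eq_empty_of_forall_notMem (s := X) (by simpa using hX),
      eq_empty_of_forall_notMem (s := Y) (by simpa using hY)] at h
    simp at h
  | x :: y :: m, hX, hY, h => by
    by_cases hxy : x ∈ Y ∧ y ∈ X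
    · exact ⟨[], x, y, m, rfl, hxy⟩
    have hX' : ∀ z ∈ X.erase y, z ∈ (y :: m).tail := fun z hz => by
      have := hX z (Finset.mem_of_mem_erase hz)
      simp_all
    have hY' : ∀ z ∈ Y.erase x, z ∈ (y :: m).dropLast := fun z hz => by
      have := hY z (Finset.mem_of_mem_erase hz)
      simp_all
    -- `x ∉ Y` or `y ∉ X`, so the two erasures together remove at most one element
    have hcard : (y :: m).tail.length < #(X.erase y) + #(Y.erase x) := by
      simp only [List.tail_cons, List.length_cons] at h ⊢
      have hXc := pred_card_le_card_erase (s := X) (a := y)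
      have hYc := pred_card_le_card_erase (s := Y) (a := x)
      by_cases hy : y ∈ X
      · rw [erase_eq_of_notMem (by tauto : x ∉ Y)]; omega
      · rw [erase_eq_of_notMem hy]; omega
    obtain ⟨s, u, u', r, hl, hu, hu'⟩ :=
      exists_eq_append_cons_cons_of_length_tail_lt hX' hY' hcard
    exact ⟨x :: s, u, u', r, by rw [hl]; rfl, Finset.mem_of_mem_erase hu,
      Finset.mem_of_mem_erase hu'⟩

end List

theorem Cycle.Chain.exists_isChain_cons {α : Type*} {R : α → α → Prop} {l : List α}
    (h : Cycle.Chain R l) {x : α} (hx : x ∈ l) :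
    ∃ m, (x :: m).Perm l ∧ (x :: m).IsChain R := by
  obtain ⟨p, q, rfl⟩ := List.mem_iff_append.1 hx
  have hrot : (p ++ x :: q).IsRotated (x :: (q ++ p)) := by
    simpa using (List.isRotated_append (l := p) (l' := x :: q))
  rw [Cycle.coe_eq_coe.2 hrot, Cycle.chain_coe_cons] at h
  exact ⟨q ++ p, hrot.perm.symm, h.prefix ⟨[x], by simp⟩⟩

theorem List.IsChain.cycleChain_of_rel_ends {α : Type*} {R : α → α → Prop} [Std.Symm R]
    {s r : List α} {u u' a b : α} (h : (s ++ u :: u' :: r).IsChain R)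
    (ha : a ∈ (s ++ u :: u' :: r).head?) (hb : b ∈ (s ++ u :: u' :: r).getLast?)
    (hub : R u b) (hau' : R a u') :
    Cycle.Chain R (u' :: (s ++ u :: r.reverse) : List α) := by
  have hsu : (s ++ [u]).IsChain R := h.prefix ⟨u' :: r, by simp⟩
  have hr : (u' :: r).reverse.IsChain R :=
    List.isChain_reverse.2 ((h.suffix ⟨s ++ [u], by simp⟩).imp fun _ _ h => Std.Symm.symm _ _ h)
  have hb' : (u' :: r).reverse.head? = some b := by
    rw [List.head?_reverse]; simpa using hb
  have ha' : (s ++ [u] ++ (u' :: r).reverse).head? = some a := by cases s <;> simpa using ha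
  rw [Cycle.chain_coe_cons,
    (by simp : s ++ u :: r.reverse ++ [u'] = s ++ [u] ++ (u' :: r).reverse)]
  refine (hsu.append hr ?_).cons ?_
  · intro x hx y hy
    rw [List.getLast?_concat, Option.mem_some_iff] at hx
    rw [hb', Option.mem_some_iff] at hy
    exact hx ▸ hy ▸ hub
  · intro y hy
    rw [ha', Option.mem_some_iff] at hy
    exact hy ▸ Std.Symm.symm _ _ hau'

namespace SimpleGraph
variable {V : Type*} (G : SimpleGraph V)

section interedges

variable [DecidableRel G.Adj]

theorem card_interedges_self_le (s : Finset V) : #(G.interedges s s) ≤ #s * (#s - 1) := by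
  have : G.interedges s s ⊆ s.offDiag := fun e he => by
    rw [mem_interedges_iff] at he
    exact mem_offDiag.2 ⟨he.1, he.2.1, he.2.2.ne⟩
  calc #(G.interedges s s) ≤ #s.offDiag := card_le_card this
    _ = #s * (#s - 1) := by rw [offDiag_card, Nat.mul_sub_one]

theorem card_interedges_comm (s t : Finset V) : #(G.interedges s t) = #(G.interedges t s) :=
  have := G.symm
  Rel.card_interedges_comm s t

theorem card_interedges_singleton_left (v : V) (s : Finset V) :
    #(G.interedges {v} s) = #{w ∈ s | G.Adj v w} := by
  refine card_nbij' Prod.snd (Prod.mk v) ?_ ?_ ?_ ?_ <;>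
    simp +contextual [Set.MapsTo, Set.LeftInvOn, Set.RightInvOn, mem_interedges_iff]

theorem interedges_univ_eq_map_toProd [Fintype V] :
    G.interedges univ univ =
      (univ : Finset G.Dart).map ⟨Dart.toProd, Dart.toProd_injective⟩ := by
  ext e
  simp only [mem_interedges_iff, mem_univ, true_and, mem_map, Function.Embedding.coeFn_mk]
  exact ⟨fun h => ⟨⟨e, h⟩, rfl⟩, by rintro ⟨d, rfl⟩; exact d.adj⟩

theorem card_interedges_univ [Fintype V] :
    #(G.interedges univ univ) = 2 * #G.edgeFinset := by
  rw [interedges_univ_eq_map_toProd, card_map, card_univ, dart_card_eq_twice_card_edges]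

variable [DecidableEq V]

theorem interedges_union_left (s₁ s₂ t : Finset V) :
    G.interedges (s₁ ∪ s₂) t = G.interedges s₁ t ∪ G.interedges s₂ t := by
  ext; simp only [mem_interedges_iff, mem_union]; tauto

theorem card_interedges_union_self {s t : Finset V} (h : Disjoint s t) :
    #(G.interedges (s ∪ t) (s ∪ t)) =
      #(G.interedges s s) + #(G.interedges t t) + 2 * #(G.interedges s t) := by
  have hunion : ∀ u, #(G.interedges (s ∪ t) u) = #(G.interedges s u) + #(G.interedges t u) :=
    fun u => by rw [interedges_union_left, card_union_of_disjoint (G.interedges_disjoint_left h u)]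
  rw [hunion, G.card_interedges_comm s, G.card_interedges_comm t, hunion, hunion,
    G.card_interedges_comm t s]
  ring

theorem card_interedges_self_eq_erase {s : Finset V} {v : V} (hv : v ∈ s) :
    #(G.interedges s s) =
      #(G.interedges (s.erase v) (s.erase v)) + 2 * #{w ∈ s | G.Adj v w} := by
  have hloop : #(G.interedges {v} {v}) = 0 := by simpa using G.card_interedges_self_le {v}
  have hnbr : #{w ∈ s.erase v | G.Adj v w} = #{w ∈ s | G.Adj v w} := by
    rw [filter_erase, erase_eq_of_notMem (by simp)]
  conv_lhs => rw [← insert_erase hv, insert_eq]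
  rw [G.card_interedges_union_self (disjoint_singleton_left.2 (notMem_erase v s)), hloop,
    card_interedges_singleton_left, hnbr, zero_add]

theorem card_interedges_self_eq_add_of_forall_not_adj {s t : Finset V} (hts : t ⊆ s)
    (h : ∀ x ∈ t, ∀ w ∈ s \ t, ¬G.Adj x w) :
    #(G.interedges s s) = #(G.interedges t t) + #(G.interedges (s \ t) (s \ t)) := by
  have hcross : G.interedges t (s \ t) = ∅ :=
    eq_empty_of_forall_notMem fun e he => by
      rw [mem_interedges_iff] at he
      exact h _ he.1 _ he.2.1 he.2.2
  conv_lhs => rw [← union_sdiff_of_subset hts]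
  rw [G.card_interedges_union_self disjoint_sdiff, hcross, card_empty, mul_zero, add_zero]

end interedges

structure IsPathIn (S : Finset V) (l : List V) : Prop where
  nodup : l.Nodup
  isChain : l.IsChain G.Adj
  subset : ∀ v ∈ l, v ∈ S

def IsLongestPathIn (S : Finset V) (l : List V) : Prop :=
  G.IsPathIn S l ∧ ∀ l', G.IsPathIn S l' → l'.length ≤ l.length

theorem contains_pathGraph_of_isChain {l : List V} (hnd : l.Nodup) (hc : l.IsChain G.Adj) :
    Contains G (pathGraph l.length) := by
  refine ⟨fun i => l[i], fun i j hij => Fin.ext (hnd.getElem_inj_iff.1 hij), fun i j hij => ?_⟩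
  rcases pathGraph_adj.1 hij with h | h
  · simpa [← h] using List.isChain_iff_getElem.1 hc i (by omega)
  · simpa [← h] using (List.isChain_iff_getElem.1 hc j (by omega)).symm

variable {G} {S : Finset V} {l : List V}

theorem IsPathIn.length_le_card (h : G.IsPathIn S l) : l.length ≤ #S := by
  classical
  rw [← List.toFinset_card_of_nodup h.nodup]
  exact card_le_card fun v hv => h.subset v (List.mem_toFinset.1 hv)

theorem IsPathIn.length_lt_of_not_contains {t : ℕ} (hfree : ¬Contains G (pathGraph t))
    (h : G.IsPathIn S l) : l.length < t := by
  by_contra! hle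
  apply hfree
  have := G.contains_pathGraph_of_isChain (h.nodup.sublist (l.take_sublist t)) (h.isChain.take t)
  rwa [List.length_take, min_eq_left hle] at this

theorem IsPathIn.cons {w : V} (h : G.IsPathIn S l) (hwS : w ∈ S) (hwl : w ∉ l)
    (hadj : ∀ a ∈ l.head?, G.Adj w a) : G.IsPathIn S (w :: l) :=
  ⟨List.nodup_cons.2 ⟨hwl, h.nodup⟩, h.isChain.cons hadj, by simpa [hwS] using h.subset⟩

theorem IsPathIn.reverse (h : G.IsPathIn S l) : G.IsPathIn S l.reverse :=
  ⟨List.nodup_reverse.2 h.nodup, List.isChain_reverse.2 (h.isChain.imp fun _ _ h => h.symm),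
    by simpa using h.subset⟩

theorem IsPathIn.of_perm {l' : List V} (h : G.IsPathIn S l) (hperm : l'.Perm l)
    (hc : l'.IsChain G.Adj) : G.IsPathIn S l' :=
  ⟨hperm.nodup_iff.2 h.nodup, hc, fun v hv => h.subset v (hperm.mem_iff.1 hv)⟩

theorem IsLongestPathIn.reverse (h : G.IsLongestPathIn S l) : G.IsLongestPathIn S l.reverse :=
  ⟨h.1.reverse, by simpa using h.2⟩

variable (G S) in
theorem exists_isLongestPathIn : ∃ l, G.IsLongestPathIn S l := by
  obtain ⟨l, hl, hmin⟩ := (InvImage.wf (fun l : List V => #S - l.length) wellFounded_lt).has_min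
    {l | G.IsPathIn S l} ⟨[], by simp, .nil, by simp⟩
  refine ⟨l, hl, fun l' hl' => ?_⟩
  have hnotlt := hmin l' hl'
  have hle := hl'.length_le_card
  simp only [InvImage, not_lt] at hnotlt
  omega

theorem IsLongestPathIn.mem_of_adj_head {a w : V} (hl : G.IsLongestPathIn S l)
    (ha : a ∈ l.head?) (hw : w ∈ S) (hadj : G.Adj a w) : w ∈ l := by
  by_contra hwl
  have := hl.2 _ (hl.1.cons hw hwl fun _ h => Option.mem_unique ha h ▸ hadj.symm)
  simp at this

theorem IsLongestPathIn.mem_tail_of_adj_head {a w : V} (hl : G.IsLongestPathIn S l)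
    (ha : a ∈ l.head?) (hw : w ∈ S) (hadj : G.Adj a w) : w ∈ l.tail := by
  have hwl := hl.mem_of_adj_head ha hw hadj
  obtain _ | ⟨a', m⟩ := l
  · simp at ha
  · obtain rfl : a' = a := by simpa using ha
    simpa [hadj.ne'] using hwl

theorem IsLongestPathIn.mem_dropLast_of_adj_getLast {b w : V} (hl : G.IsLongestPathIn S l)
    (hb : b ∈ l.getLast?) (hw : w ∈ S) (hadj : G.Adj b w) : w ∈ l.dropLast := by
  have hwl := hl.reverse.mem_of_adj_head (by rwa [List.head?_reverse]) hw hadj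
  refine List.mem_dropLast_of_mem_of_ne_getLast? (List.mem_reverse.1 hwl) ?_
  rw [Option.mem_def.1 hb]
  simpa using hadj.ne'

theorem IsLongestPathIn.not_adj_of_mem_of_notMem [DecidableEq V] [DecidableRel G.Adj]
    {a b x w : V}
    (hl : G.IsLongestPathIn S l) (ha : a ∈ l.head?) (hb : b ∈ l.getLast?)
    (hdeg : l.tail.length < #{v ∈ S | G.Adj a v} + #{v ∈ S | G.Adj b v})
    (hx : x ∈ l) (hw : w ∈ S) (hwl : w ∉ l) : ¬G.Adj x w := by
  intro hxw
  obtain ⟨s, u, u', r, rfl, hu, hu'⟩ := List.exists_eq_append_cons_cons_of_length_tail_lt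
    (fun v hv => hl.mem_tail_of_adj_head ha (mem_filter.1 hv).1 (mem_filter.1 hv).2)
    (fun v hv => hl.mem_dropLast_of_adj_getLast hb (mem_filter.1 hv).1 (mem_filter.1 hv).2) hdeg
  have := G.symm
  have hcycle := hl.1.isChain.cycleChain_of_rel_ends ha hb (mem_filter.1 hu).2.symm
    (mem_filter.1 hu').2
  have hperm : (u' :: (s ++ u :: r.reverse)).Perm (s ++ u :: u' :: r) := by
    rw [List.perm_iff_count]
    intro v
    simp only [List.count_cons, List.count_append, List.count_reverse, beq_iff_eq]
    omega
  obtain ⟨m, hm, hchain⟩ := hcycle.exists_isChain_cons (hperm.mem_iff.2 hx)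
  have hpath := hl.1.of_perm (hm.trans hperm) hchain
  have := hl.2 _ (hpath.cons hw (fun h => hwl ((hm.trans hperm).mem_iff.1 h))
    fun _ h => Option.mem_unique rfl h ▸ hxw.symm)
  simp [(hm.trans hperm).length_eq] at this

theorem exists_subset_card_lt_forall_not_adj [DecidableEq V] [DecidableRel G.Adj] {t : ℕ}
    (hfree : ¬Contains G (pathGraph t)) (hS : S.Nonempty)
    (hdeg : ∀ v ∈ S, t - 2 < 2 * #{w ∈ S | G.Adj v w}) :
    ∃ T ⊆ S, T.Nonempty ∧ #T < t ∧ ∀ x ∈ T, ∀ w ∈ S \ T, ¬G.Adj x w := by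
  obtain ⟨v, hv⟩ := hS
  obtain ⟨l, hl⟩ := G.exists_isLongestPathIn S
  have hne : l ≠ [] := by
    rintro rfl
    simpa using hl.2 [v] ⟨List.nodup_singleton v, .singleton v, by simpa using hv⟩
  have hlt := hl.1.length_lt_of_not_contains hfree
  have hend : l.tail.length < #{w ∈ S | G.Adj (l.head hne) w} +
      #{w ∈ S | G.Adj (l.getLast hne) w} := by
    have := hdeg _ (hl.1.subset _ (List.head_mem hne))
    have := hdeg _ (hl.1.subset _ (List.getLast_mem hne))
    have := List.length_pos_iff.2 hne
    rw [List.length_tail]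
    omega
  refine ⟨l.toFinset, fun x hx => hl.1.subset x (List.mem_toFinset.1 hx),
    ⟨_, List.mem_toFinset.2 (List.head_mem hne)⟩,
    (List.toFinset_card_of_nodup hl.1.nodup).trans_lt hlt, fun x hx w hw => ?_⟩
  rw [mem_sdiff, List.mem_toFinset] at hw
  exact hl.not_adj_of_mem_of_notMem (List.head?_eq_some_head hne)
    (List.getLast?_eq_some_getLast hne) hend (List.mem_toFinset.1 hx) hw.1 hw.2

theorem card_interedges_self_le_of_not_contains [DecidableEq V] [DecidableRel G.Adj] {t : ℕ}
    (hfree : ¬Contains G (pathGraph t)) (S : Finset V) :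
    #(G.interedges S S) ≤ (t - 2) * #S := by
  induction S using Finset.strongInduction with
  | H S ih =>
  rcases S.eq_empty_or_nonempty with rfl | hS
  · simp
  by_cases hlow : ∃ v ∈ S, 2 * #{w ∈ S | G.Adj v w} ≤ t - 2
  · obtain ⟨v, hv, hdeg⟩ := hlow
    have herase := ih _ (erase_ssubset hv)
    rw [card_erase_of_mem hv] at herase
    calc #(G.interedges S S)
        _ = #(G.interedges (S.erase v) (S.erase v)) + 2 * #{w ∈ S | G.Adj v w} :=
          G.card_interedges_self_eq_erase hv
        _ ≤ (t - 2) * (#S - 1) + (t - 2) := add_le_add herase hdeg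
        _ = (t - 2) * #S := by
          rw [Nat.mul_sub_one, Nat.sub_add_cancel (Nat.le_mul_of_pos_right _ hS.card_pos)]
  · push Not at hlow
    obtain ⟨T, hTS, hT, hTt, hiso⟩ := exists_subset_card_lt_forall_not_adj hfree hS hlow
    have hTbound : #(G.interedges T T) ≤ (t - 2) * #T :=
      (G.card_interedges_self_le T).trans <| by
        rw [mul_comm (t - 2)]
        exact Nat.mul_le_mul_left _ (by omega)
    calc #(G.interedges S S) = #(G.interedges T T) + #(G.interedges (S \ T) (S \ T)) :=
          G.card_interedges_self_eq_add_of_forall_not_adj hTS hiso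
      _ ≤ (t - 2) * #T + (t - 2) * #(S \ T) := add_le_add hTbound (ih _ (sdiff_ssubset hTS hT))
      _ = (t - 2) * #S := by rw [← mul_add, add_comm, card_sdiff_add_card_eq_card hTS]

end SimpleGraph

/-- Erdős–Gallai. For every integer `t ≥ 4`, every `n`-vertex graph
containing no path on `t` vertices as a subgraph has at most `((t−2)/2)·n` edges. -/
theorem erdos_gallai_path {V : Type*} [Fintype V] [DecidableEq V]
    (t : ℕ) (ht : 4 ≤ t) (G : SimpleGraph V) [DecidableRel G.Adj]
    (hfree : ¬ Contains G (SimpleGraph.pathGraph t)) :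
    (G.edgeFinset.card : ℚ) ≤ ((t : ℚ) - 2) / 2 * Fintype.card V := by
  have hbound := G.card_interedges_self_le_of_not_contains hfree univ
  rw [G.card_interedges_univ, card_univ] at hbound
  have hbound' : (2 * #G.edgeFinset : ℚ) ≤ ((t - 2 : ℕ) : ℚ) * Fintype.card V := by
    exact_mod_cast hbound
  rw [Nat.cast_sub (by omega : 2 ≤ t)] at hbound'
  push_cast at hbound'
  linarith
end

section
/- Let G be a graph on n vertices with m edges, and let k = m − n ≥ 0. Then there exists a set S ⊆ E(G) with |S| ≤ k such that G − S has no subgraph isomorphic to P_4, if and only if G contains a perfect triangle tiling. -/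
/-- A perfect triangle tiling (triangle factor) of `G`: a family of pairwise vertex-disjoint
triangles of `G` covering every vertex. -/
def HasTriangleFactor {V : Type*} (G : SimpleGraph V) : Prop :=
  ∃ T : Set (Finset V),
    (∀ s ∈ T, s.card = 3 ∧ ∀ u ∈ s, ∀ v ∈ s, u ≠ v → G.Adj u v) ∧
    (∀ s ∈ T, ∀ s' ∈ T, s ≠ s' → ∀ v ∈ s, v ∉ s') ∧
    (∀ v : V, ∃ s ∈ T, v ∈ s)

/-!
In a `P₄`-free graph every edge can be charged to a vertex: to the apex of a triangle on it
if there is one, and otherwise to an endpoint of degree one (if both endpoints of `xy` had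
further neighbours `z ≠ w`, then `z x y w` would be a `P₄`). A vertex of a triangle has no
neighbours outside it, so no vertex is charged twice and `|E| ≤ |V|`, with equality only if
every vertex lies in a triangle; these triangles then tile the graph. Conversely, keeping only
the edges inside the tiles of a triangle tiling leaves a `2`-regular graph, with `|V|` edges,
whose components are triangles and hence contain no `P₄`.
-/

lemma HasTriangleFactor.mono {V : Type*} {G H : SimpleGraph V} (hle : H ≤ G)
    (hH : HasTriangleFactor H) : HasTriangleFactor G :=
  let ⟨T, htri, hdisj, hcover⟩ := hH
  ⟨T, fun s hs => ⟨(htri s hs).1, fun u hu v hv huv => hle ((htri s hs).2 u hu v hv huv)⟩,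
    hdisj, hcover⟩

namespace SimpleGraph

variable {V : Type*}

lemma contains_pathGraph_four {H : SimpleGraph V} {a b c d : V}
    (hab : H.Adj a b) (hbc : H.Adj b c) (hcd : H.Adj c d) (hac : a ≠ c) (had : a ≠ d)
    (hbd : b ≠ d) : Contains H (pathGraph 4) := by
  refine ⟨![a, b, c, d], ?_, fun i j hij => ?_⟩
  · have := hab.ne; have := hbc.ne; have := hcd.ne
    intro i j hij
    fin_cases i <;> fin_cases j <;> simp_all
  · rw [pathGraph_adj] at hij
    have := hab.symm; have := hbc.symm; have := hcd.symm
    fin_cases i <;> fin_cases j <;> simp_all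

section P4Free

variable {H : SimpleGraph V}

lemma eq_or_eq_of_adj_of_triangle (hH : ¬ Contains H (pathGraph 4)) {v a b x : V}
    (hva : H.Adj v a) (hvb : H.Adj v b) (hab : H.Adj a b) (hvx : H.Adj v x) :
    x = a ∨ x = b := by
  by_contra! hx
  exact hH (contains_pathGraph_four hvx.symm hva hab hx.1 hx.2 hvb.ne)

lemma mem_of_adj_of_is3Clique (hH : ¬ Contains H (pathGraph 4)) {s : Finset V} {v x : V}
    (hs : H.IsNClique 3 s) (hv : v ∈ s) (hvx : H.Adj v x) : x ∈ s := by
  classical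
  obtain ⟨a, b, c, hab, hac, hbc, hs⟩ := is3Clique_iff.mp hs
  rw [hs] at hv ⊢
  simp only [Finset.mem_insert, Finset.mem_singleton] at hv ⊢
  rcases hv with rfl | rfl | rfl
  · have := eq_or_eq_of_adj_of_triangle hH hab hac hbc hvx
    tauto
  · have := eq_or_eq_of_adj_of_triangle hH hab.symm hbc hac hvx
    tauto
  · have := eq_or_eq_of_adj_of_triangle hH hac.symm hbc.symm hab hvx
    tauto

def ChargedTo (H : SimpleGraph V) (e : Sym2 V) (v : V) : Prop :=
  (∃ a b, e = s(a, b) ∧ H.Adj v a ∧ H.Adj v b) ∨ (∃ w, e = s(v, w) ∧ ∀ u, H.Adj v u → u = w)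

lemma exists_chargedTo (hH : ¬ Contains H (pathGraph 4)) {e : Sym2 V} (he : e ∈ H.edgeSet) :
    ∃ v, H.ChargedTo e v := by
  induction e with | h x y => ?_
  have hxy : H.Adj x y := he
  by_cases hapex : ∃ z, H.Adj z x ∧ H.Adj z y
  · obtain ⟨z, hzx, hzy⟩ := hapex
    exact ⟨z, .inl ⟨x, y, rfl, hzx, hzy⟩⟩
  by_cases hx : ∀ u, H.Adj x u → u = y
  · exact ⟨x, .inr ⟨y, rfl, hx⟩⟩
  by_cases hy : ∀ u, H.Adj y u → u = x
  · exact ⟨y, .inr ⟨x, Sym2.eq_swap, hy⟩⟩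
  push Not at hapex hx hy
  obtain ⟨z, hxz, hzy⟩ := hx
  obtain ⟨w, hyw, hwx⟩ := hy
  have hzw : z ≠ w := fun h => hapex z hxz.symm (h ▸ hyw.symm)
  exact (hH (contains_pathGraph_four hxz.symm hxy hyw hzy hzw hwx.symm)).elim

lemma eq_of_chargedTo (hH : ¬ Contains H (pathGraph 4)) {e e' : Sym2 V} {v : V}
    (he : e ∈ H.edgeSet) (he' : e' ∈ H.edgeSet) (h : H.ChargedTo e v) (h' : H.ChargedTo e' v) :
    e = e' := by
  rcases h with ⟨a, b, rfl, hva, hvb⟩ | ⟨w, rfl, hw⟩ <;>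
    rcases h' with ⟨a', b', rfl, hva', hvb'⟩ | ⟨w', rfl, hw'⟩
  · have hab : H.Adj a b := he
    have hab' : H.Adj a' b' := he'
    rcases eq_or_eq_of_adj_of_triangle hH hva hvb hab hva' with rfl | rfl <;>
      rcases eq_or_eq_of_adj_of_triangle hH hva hvb hab hvb' with rfl | rfl
    exacts [absurd rfl hab'.ne, rfl, Sym2.eq_swap, absurd rfl hab'.ne]
  · exact absurd ((hw' a hva).trans (hw' b hvb).symm) (he : H.Adj a b).ne
  · exact absurd ((hw a' hva').trans (hw b' hvb').symm) (he' : H.Adj a' b').ne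
  · rw [hw w' he']

lemma exists_triangle_of_card_le_ncard_edgeSet [Fintype V] (hH : ¬ Contains H (pathGraph 4))
    (hcard : Fintype.card V ≤ H.edgeSet.ncard) (v : V) :
    ∃ a b, H.Adj v a ∧ H.Adj v b ∧ H.Adj a b := by
  choose f hf using fun e : H.edgeSet => exists_chargedTo hH e.2
  have hinj : Function.Injective f := fun e e' hee' =>
    Subtype.ext (eq_of_chargedTo hH e.2 e'.2 (hf e) (hee' ▸ hf e'))
  have hsurj : Function.Surjective f :=
    (hinj.bijective_of_nat_card_le (by rwa [Nat.card_eq_fintype_card, Nat.card_coe_set_eq])).2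
  obtain ⟨e, rfl⟩ := hsurj v
  rcases hf e with ⟨a, b, he, hva, hvb⟩ | ⟨w, he, hw⟩
  · exact ⟨a, b, hva, hvb, by simpa [he] using e.2⟩
  -- Otherwise `v` is a leaf on `w`, and `w` cannot be charged: as an apex its triangle would
  -- contain `v`, and as a leaf it would be charged by the same edge as `v`.
  have hvw : H.Adj (f e) w := by simpa [he] using e.2
  exfalso
  obtain ⟨e', hfe'⟩ := hsurj w
  rcases hf e' with ⟨a, b, he', hwa, hwb⟩ | ⟨u, he', hu⟩
  · have hab : H.Adj a b := by simpa [he'] using e'.2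
    rw [hfe'] at hwa hwb
    rcases eq_or_eq_of_adj_of_triangle hH hwa hwb hab hvw.symm with hva | hva
    · exact hwb.ne (hw b (hva ▸ hab)).symm
    · exact hwa.ne (hw a (hva ▸ hab.symm)).symm
  · rw [hfe'] at he' hu
    have hee' : e = e' := Subtype.ext (by rw [he, he', hu _ hvw.symm, Sym2.eq_swap])
    exact hvw.ne (hee' ▸ hfe')

lemma hasTriangleFactor_of_forall_exists_triangle (hH : ¬ Contains H (pathGraph 4))
    (htri : ∀ v, ∃ a b, H.Adj v a ∧ H.Adj v b ∧ H.Adj a b) : HasTriangleFactor H := by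
  classical
  refine ⟨H.cliqueSet 3, fun s hs => ⟨hs.card_eq, fun u hu v hv huv => hs.isClique hu hv huv⟩,
    fun s hs s' hs' hne v hv hv' => hne ?_, fun v => ?_⟩
  · refine (Finset.eq_of_subset_of_card_le (fun x hx => ?_) ?_).symm
    · rcases eq_or_ne v x with rfl | hvx
      · exact hv
      · exact mem_of_adj_of_is3Clique hH hs hv (hs'.isClique hv' hx hvx)
    · rw [hs.card_eq, hs'.card_eq]
  · obtain ⟨a, b, hva, hvb, hab⟩ := htri v
    exact ⟨{v, a, b}, is3Clique_triple_iff.mpr ⟨hva, hvb, hab⟩, Finset.mem_insert_self v _⟩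

lemma hasTriangleFactor_of_card_le_ncard_edgeSet [Fintype V] (hH : ¬ Contains H (pathGraph 4))
    (hcard : Fintype.card V ≤ H.edgeSet.ncard) : HasTriangleFactor H :=
  hasTriangleFactor_of_forall_exists_triangle hH
    (exists_triangle_of_card_le_ncard_edgeSet hH hcard)

end P4Free

section TileGraph

variable {T : Set (Finset V)}

def tileGraph (T : Set (Finset V)) : SimpleGraph V where
  Adj u v := u ≠ v ∧ ∃ t ∈ T, u ∈ t ∧ v ∈ t
  symm := ⟨fun _ _ ⟨huv, t, ht, hu, hv⟩ => ⟨huv.symm, t, ht, hv, hu⟩⟩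
  loopless := ⟨fun _ h => h.1 rfl⟩

@[simp]
lemma tileGraph_adj {u v : V} : (tileGraph T).Adj u v ↔ u ≠ v ∧ ∃ t ∈ T, u ∈ t ∧ v ∈ t :=
  Iff.rfl

lemma mem_of_reachable_tileGraph (hdisj : ∀ s ∈ T, ∀ s' ∈ T, s ≠ s' → ∀ v ∈ s, v ∉ s')
    {t : Finset V} (ht : t ∈ T) {u v : V} (huv : (tileGraph T).Reachable u v) (hu : u ∈ t) :
    v ∈ t := by
  rw [reachable_iff_reflTransGen] at huv
  induction huv with
  | refl => exact hu
  | tail _ hxy ih =>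
    obtain ⟨-, t', ht', hx, hy⟩ := tileGraph_adj.mp hxy
    obtain rfl | hne := eq_or_ne t t'
    · exact hy
    · exact absurd hx (hdisj t ht t' ht' hne _ ih)

lemma not_contains_tileGraph (hcard : ∀ s ∈ T, s.card = 3)
    (hdisj : ∀ s ∈ T, ∀ s' ∈ T, s ≠ s' → ∀ v ∈ s, v ∉ s') (hcover : ∀ v, ∃ s ∈ T, v ∈ s)
    {β : Type*} [Fintype β] {F : SimpleGraph β} (hF : F.Connected) (hβ : 3 < Fintype.card β) :
    ¬ Contains (tileGraph T) F := by
  rintro ⟨f, hinj, hhom⟩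
  obtain ⟨x₀⟩ := hF.nonempty
  obtain ⟨t, ht, hx₀⟩ := hcover (f x₀)
  have hmem : ∀ x, f x ∈ t := fun x =>
    mem_of_reachable_tileGraph hdisj ht ((hF x₀ x).map ⟨f, hhom _ _⟩) hx₀
  have := Finset.card_le_card_of_injOn (s := Finset.univ) f (fun x _ => hmem x) hinj.injOn
  rw [Finset.card_univ, hcard t ht] at this
  omega

lemma ncard_edgeSet_tileGraph [Fintype V] (hcard : ∀ s ∈ T, s.card = 3)
    (hdisj : ∀ s ∈ T, ∀ s' ∈ T, s ≠ s' → ∀ v ∈ s, v ∉ s') (hcover : ∀ v, ∃ s ∈ T, v ∈ s) :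
    (tileGraph T).edgeSet.ncard = Fintype.card V := by
  classical
  have hdeg : ∀ v, (tileGraph T).degree v = 2 := fun v => by
    obtain ⟨t, ht, hv⟩ := hcover v
    have : (tileGraph T).neighborFinset v = t.erase v := by
      ext u
      simp only [mem_neighborFinset, Finset.mem_erase]
      refine ⟨fun hvu => ⟨hvu.ne.symm, ?_⟩,
        fun ⟨huv, hu⟩ => tileGraph_adj.mpr ⟨huv.symm, t, ht, hv, hu⟩⟩
      exact mem_of_reachable_tileGraph hdisj ht hvu.reachable hv
    rw [← card_neighborFinset_eq_degree, this, Finset.card_erase_of_mem hv, hcard t ht]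
  have := (tileGraph T).sum_degrees_eq_twice_card_edges
  simp only [hdeg, Finset.sum_const, Finset.card_univ, smul_eq_mul] at this
  rw [← coe_edgeFinset, Set.ncard_coe_finset]
  omega

end TileGraph

end SimpleGraph

open SimpleGraph

/-- Let `G` be a graph on `n` vertices with `m` edges and let
`k = m − n ≥ 0`. Then there is a set `S ⊆ E(G)` with `|S| ≤ k` such that `G − S` has no
subgraph isomorphic to `P₄`, if and only if `G` contains a perfect triangle tiling. -/
theorem p4_deletion_iff_triangleFactor {V : Type*} [Fintype V] (G : SimpleGraph V)
    (n m k : ℕ) (hn : n = Fintype.card V) (hm : m = G.edgeSet.ncard)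
    (hnm : n ≤ m) (hk : k = m - n) :
    (∃ S ⊆ G.edgeSet, S.ncard ≤ k ∧
        ¬ Contains (G.deleteEdges S) (SimpleGraph.pathGraph 4)) ↔
      HasTriangleFactor G := by
  constructor
  · rintro ⟨S, hS, hScard, hfree⟩
    have hcard : Fintype.card V ≤ (G.deleteEdges S).edgeSet.ncard := by
      rw [edgeSet_deleteEdges, Set.ncard_sdiff hS]
      omega
    exact (hasTriangleFactor_of_card_le_ncard_edgeSet hfree hcard).mono (G.deleteEdges_le S)
  · rintro ⟨T, htri, hdisj, hcover⟩
    have hcard : ∀ s ∈ T, s.card = 3 := fun s hs => (htri s hs).1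
    have hle : tileGraph T ≤ G := fun u v huv => by
      obtain ⟨huv, t, ht, hu, hv⟩ := tileGraph_adj.mp huv
      exact (htri t ht).2 u hu v hv huv
    refine ⟨G.edgeSet \ (tileGraph T).edgeSet, Set.sdiff_subset, ?_, ?_⟩
    · rw [Set.ncard_sdiff (edgeSet_mono hle), ncard_edgeSet_tileGraph hcard hdisj hcover]
      omega
    · rw [deleteEdges_sdiff_eq_of_le hle]
      exact not_contains_tileGraph hcard hdisj hcover (pathGraph_connected 3) (by simp)
end

section
/- The clause gadget D satisfies: for U_i = {a_4^i, a_5^i, a_6^i} (i = 1,2,3) and any index set I ⊆ {1,2,3}, the graph D − ⋃_{i∈I} U_i admits a perfect triangle tiling if and only if |I| = 2. -/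
/-- The clause gadget `D`: three copies `W^1, W^2, W^3` of the graph `W` (the 6-cycle
`a₁a₂a₃a₄a₅a₆` plus chords `a₁a₅`, `a₂a₄`, `a₂a₅`) with `a₁ʲ` identified with `a₃ʲ⁺¹`
(indices mod 3), plus the edges `a₂ʲa₂ʲ⁺¹`. Vertices are encoded as pairs `(j, t)` with
`j : Fin 3` the copy and `t : Fin 5` encoding `a₁, a₂, a₄, a₅, a₆` respectively
(so `a₃ʲ = (j − 1, 0)`). -/
def clauseGadget : SimpleGraph (Fin 3 × Fin 5) :=
  SimpleGraph.fromRel fun x y =>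
    ∃ j : Fin 3,
      (x = (j, 0) ∧ y = (j, 1)) ∨          -- a₁a₂
      (x = (j, 1) ∧ y = (j - 1, 0)) ∨      -- a₂a₃
      (x = (j - 1, 0) ∧ y = (j, 2)) ∨      -- a₃a₄
      (x = (j, 2) ∧ y = (j, 3)) ∨          -- a₄a₅
      (x = (j, 3) ∧ y = (j, 4)) ∨          -- a₅a₆
      (x = (j, 4) ∧ y = (j, 0)) ∨          -- a₆a₁
      (x = (j, 0) ∧ y = (j, 3)) ∨          -- a₁a₅
      (x = (j, 1) ∧ y = (j, 2)) ∨          -- a₂a₄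
      (x = (j, 1) ∧ y = (j, 3)) ∨          -- a₂a₅
      (x = (j, 1) ∧ y = (j + 1, 1))        -- a₂ʲa₂ʲ⁺¹


/-!
If the copy `Wʲ` is intact, `a₆ʲ` has only the neighbours `a₅ʲ` and `a₁ʲ`, so every triangle
tiling contains `a₁ʲa₅ʲa₆ʲ`. When two cyclically consecutive copies `Wʲ⁻¹, Wʲ` are intact (which
happens whenever `|I| ≤ 1`), these forced triangles use up `a₅ʲ` and `a₁ʲ⁻¹ = a₃ʲ`, and `a₄ʲ` is
left with the single neighbour `a₂ʲ`. When `|I| = 3` only the vertices `a₁ʲ, a₂ʲ` remain; each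
`a₁ʲ` is forced into `a₁ʲa₂ʲa₂ʲ⁺¹`, and two of these triangles overlap. When `I` misses exactly
`j`, the triangles `a₁ʲa₅ʲa₆ʲ`, `a₂ʲa₃ʲa₄ʲ` and `a₁ʲ⁺¹a₂ʲ⁺¹a₂ʲ⁻¹` tile what is left.
-/

open Finset

namespace SimpleGraph

variable {V : Type*} {G : SimpleGraph V} {s : Set V} {T : Set (Finset V)}

structure IsTriangleTilingOn (G : SimpleGraph V) (s : Set V) (T : Set (Finset V)) : Prop where
  isNClique : ∀ t ∈ T, G.IsNClique 3 t
  subset : ∀ t ∈ T, ↑t ⊆ s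
  pairwiseDisjoint : T.PairwiseDisjoint id
  exists_mem : ∀ v ∈ s, ∃ t ∈ T, v ∈ t

theorem hasTriangleFactor_induce_iff :
    HasTriangleFactor (G.induce s) ↔ ∃ T, G.IsTriangleTilingOn s T := by
  classical
  constructor
  · rintro ⟨T, hcl, hdisj, hcov⟩
    refine ⟨(·.map (.subtype _)) '' T, ⟨?_, ?_, ?_, ?_⟩⟩
    · rintro _ ⟨t, ht, rfl⟩
      exact (isNClique_induce_iff s t 3).1 ⟨(hcl t ht).2, (hcl t ht).1⟩
    · rintro _ ⟨t, -, rfl⟩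
      simp
    · rintro _ ⟨t, ht, rfl⟩ _ ⟨t', ht', rfl⟩ hne
      rw [Function.onFun, id, id, disjoint_map]
      exact Finset.disjoint_left.2 (hdisj t ht t' ht' (ne_of_apply_ne _ hne))
    · intro v hv
      obtain ⟨t, ht, hvt⟩ := hcov ⟨v, hv⟩
      exact ⟨_, ⟨t, ht, rfl⟩, mem_map_of_mem _ hvt⟩
  · rintro ⟨T, hcl, hsub, hdisj, hcov⟩
    have map_subtype : ∀ t ∈ T, (t.subtype (· ∈ s)).map (.subtype _) = t :=
      fun t ht => subtype_map_of_mem fun _ hv => hsub t ht hv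
    refine ⟨(·.subtype (· ∈ s)) '' T, ?_, ?_, ?_⟩
    · rintro _ ⟨t, ht, rfl⟩
      have h := (isNClique_induce_iff s _ 3).2 ((map_subtype t ht).symm ▸ hcl t ht)
      exact ⟨h.card_eq, fun u hu v hv => h.isClique hu hv⟩
    · rintro _ ⟨t, ht, rfl⟩ _ ⟨t', ht', rfl⟩ hne v hv hv'
      have htt' : t ≠ t' := by rintro rfl; exact hne rfl
      exact Finset.disjoint_left.1 (hdisj ht ht' htt') (mem_subtype.1 hv) (mem_subtype.1 hv')
    · intro v
      obtain ⟨t, ht, hvt⟩ := hcov v v.2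
      exact ⟨_, ⟨t, ht, rfl⟩, mem_subtype.2 hvt⟩

theorem IsNClique.exists_eq_triple_of_mem [DecidableEq V] {t : Finset V} {v : V}
    (ht : G.IsNClique 3 t) (hv : v ∈ t) :
    ∃ a b, a ≠ b ∧ G.Adj v a ∧ G.Adj v b ∧ t = {v, a, b} := by
  obtain ⟨a, b, hab, hpair⟩ := card_eq_two.1 (ht.erase_of_mem hv).card_eq
  have ha : a ∈ t.erase v := hpair ▸ mem_insert_self a {b}
  have hb : b ∈ t.erase v := hpair ▸ mem_insert_of_mem (mem_singleton_self b)
  refine ⟨a, b, hab, ht.isClique hv (mem_of_mem_erase ha) (ne_of_mem_erase ha).symm,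
    ht.isClique hv (mem_of_mem_erase hb) (ne_of_mem_erase hb).symm, ?_⟩
  rw [← hpair, insert_erase hv]

namespace IsTriangleTilingOn

variable [DecidableEq V]

theorem insert_mem (hT : G.IsTriangleTilingOn s T) {v x y : V} (hv : v ∈ s) (hxy : x ≠ y)
    (hN : ∀ a ∈ s, G.Adj v a → a = x ∨ a = y) : {v, x, y} ∈ T := by
  obtain ⟨t, ht, hvt⟩ := hT.exists_mem v hv
  obtain ⟨a, b, hab, hva, hvb, rfl⟩ := (hT.isNClique t ht).exists_eq_triple_of_mem hvt
  have hsub := hT.subset _ ht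
  rcases hN a (hsub (by simp)) hva with rfl | rfl <;>
    rcases hN b (hsub (by simp)) hvb with rfl | rfl
  · exact absurd rfl hab
  · exact ht
  · rwa [pair_comm]
  · exact absurd rfl hab

theorem false_of_neighbors_subset (hT : G.IsTriangleTilingOn s T) {w u : V} {t₁ t₂ : Finset V}
    (hw : w ∈ s) (ht₁ : t₁ ∈ T) (ht₂ : t₂ ∈ T) (hw₁ : w ∉ t₁) (hw₂ : w ∉ t₂)
    (hN : ∀ a ∈ s, G.Adj w a → a ∈ t₁ ∨ a ∈ t₂ ∨ a = u) : False := by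
  obtain ⟨t, ht, hwt⟩ := hT.exists_mem w hw
  have avoids (t' : Finset V) (ht' : t' ∈ T) (hw' : w ∉ t') : ∀ c ∈ t, c ∉ t' :=
    Finset.disjoint_left.1 (hT.pairwiseDisjoint ht ht' fun h => hw' (h ▸ hwt))
  have eq_u : ∀ c ∈ t, G.Adj w c → c = u := fun c hc hwc =>
    ((hN c (hT.subset t ht hc) hwc).resolve_left (avoids t₁ ht₁ hw₁ c hc)).resolve_left
      (avoids t₂ ht₂ hw₂ c hc)
  obtain ⟨a, b, hab, hwa, hwb, rfl⟩ := (hT.isNClique t ht).exists_eq_triple_of_mem hwt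
  exact hab ((eq_u a (by simp) hwa).trans (eq_u b (by simp) hwb).symm)

end IsTriangleTilingOn

theorem isTriangleTilingOn_triple [DecidableEq V] {t₁ t₂ t₃ : Finset V}
    (h₁ : G.IsNClique 3 t₁) (h₂ : G.IsNClique 3 t₂) (h₃ : G.IsNClique 3 t₃)
    (h₁₂ : Disjoint t₁ t₂) (h₁₃ : Disjoint t₁ t₃) (h₂₃ : Disjoint t₂ t₃) :
    G.IsTriangleTilingOn ↑(t₁ ∪ t₂ ∪ t₃) {t₁, t₂, t₃} where
  isNClique := by simp [h₁, h₂, h₃]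
  subset := by rintro t (rfl | rfl | rfl) <;> intro v hv <;> simp_all
  pairwiseDisjoint := by
    simp [Set.pairwiseDisjoint_insert, h₁₂, h₁₃, h₂₃]
  exists_mem := by aesop

end SimpleGraph

set_option synthInstance.maxSize 2000 in
instance : DecidableRel clauseGadget.Adj := fun a b =>
  decidable_of_iff _ (SimpleGraph.fromRel_adj _ a b).symm

theorem clauseGadget_adj_a₆ {j : Fin 3} {a : Fin 3 × Fin 5} :
    clauseGadget.Adj (j, 4) a → a = (j, 3) ∨ a = (j, 0) := by
  revert j a; decide

theorem clauseGadget_adj_a₄ {j : Fin 3} {a : Fin 3 × Fin 5} :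
    clauseGadget.Adj (j, 2) a → a = (j, 3) ∨ a = (j - 1, 0) ∨ a = (j, 1) := by
  revert j a; decide

theorem clauseGadget_adj_a₁ {j : Fin 3} {a : Fin 3 × Fin 5} :
    clauseGadget.Adj (j, 0) a → a.2 ≤ 1 → a = (j, 1) ∨ a = (j + 1, 1) := by
  revert j a; decide

def remainingVertices (I : Finset (Fin 3)) : Set (Fin 3 × Fin 5) :=
  {v | v.1 ∈ I ∧ (v.2 = 2 ∨ v.2 = 3 ∨ v.2 = 4)}ᶜ

theorem not_isTriangleTilingOn_of_consecutive_notMem {I : Finset (Fin 3)} {j : Fin 3}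
    {T : Set (Finset (Fin 3 × Fin 5))} (hj : j ∉ I) (hj' : j - 1 ∉ I) :
    ¬ clauseGadget.IsTriangleTilingOn (remainingVertices I) T := by
  intro hT
  have mem (i : Fin 3) (hi : i ∉ I) (t : Fin 5) : (i, t) ∈ remainingVertices I :=
    fun h => hi h.1
  have forced (i : Fin 3) (hi : i ∉ I) : {(i, 4), (i, 3), (i, 0)} ∈ T :=
    hT.insert_mem (mem i hi 4) (by simp) fun _ _ => clauseGadget_adj_a₆
  refine hT.false_of_neighbors_subset (u := (j, 1)) (mem j hj 2) (forced j hj)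
    (forced (j - 1) hj') (by simp) (by simp) fun a _ ha => ?_
  rcases clauseGadget_adj_a₄ ha with rfl | rfl | rfl <;> simp

theorem not_isTriangleTilingOn_univ {T : Set (Finset (Fin 3 × Fin 5))} :
    ¬ clauseGadget.IsTriangleTilingOn (remainingVertices univ) T := by
  intro hT
  have snd_le_one (a : Fin 3 × Fin 5) (ha : a ∈ remainingVertices univ) : a.2 ≤ 1 := by
    simp only [remainingVertices, Set.mem_compl_iff, Set.mem_ofPred_eq, mem_univ, true_and] at ha
    omega
  have forced (j : Fin 3) : {(j, 0), (j, 1), (j + 1, 1)} ∈ T :=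
    hT.insert_mem (by simp [remainingVertices]) (by simp)
      fun a ha hja => clauseGadget_adj_a₁ hja (snd_le_one a ha)
  exact Finset.disjoint_left.1 (hT.pairwiseDisjoint (forced 0) (forced 1) (by decide))
    (by decide : ((1 : Fin 3), (1 : Fin 5)) ∈ _) (by decide)

theorem isTriangleTilingOn_compl_singleton (j : Fin 3) :
    clauseGadget.IsTriangleTilingOn (remainingVertices {j}ᶜ)
      {{(j, 0), (j, 3), (j, 4)}, {(j, 2), (j, 1), (j - 1, 0)},
        {(j + 1, 0), (j + 1, 1), (j - 1, 1)}} := by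
  have hs : remainingVertices {j}ᶜ =
      ↑({(j, 0), (j, 3), (j, 4)} ∪ {(j, 2), (j, 1), (j - 1, 0)} ∪
        {(j + 1, 0), (j + 1, 1), (j - 1, 1)} : Finset (Fin 3 × Fin 5)) := by
    ext v
    simp only [remainingVertices, Set.mem_compl_iff, Set.mem_ofPred_eq, mem_compl,
      mem_singleton, coe_union, coe_insert, coe_singleton]
    revert j v; decide
  rw [hs]
  clear hs
  apply SimpleGraph.isTriangleTilingOn_triple <;> revert j <;> decide

theorem eq_univ_or_exists_consecutive_notMem {I : Finset (Fin 3)} (h : I.card ≠ 2) :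
    I = univ ∨ ∃ j ∉ I, j - 1 ∉ I := by
  revert I; decide

/-- For `Uᵢ = {a₄ⁱ, a₅ⁱ, a₆ⁱ}` (encoded as `(i, 2), (i, 3), (i, 4)`) and
any index set `I ⊆ {1,2,3}`, the graph `D − ⋃_{i∈I} Uᵢ` admits a perfect triangle tiling if
and only if `|I| = 2`. -/
theorem clauseGadget_triangleFactor_iff (I : Finset (Fin 3)) :
    HasTriangleFactor
        (clauseGadget.induce {v | v.1 ∈ I ∧ (v.2 = 2 ∨ v.2 = 3 ∨ v.2 = 4)}ᶜ) ↔
      I.card = 2 := by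
  refine SimpleGraph.hasTriangleFactor_induce_iff.trans ⟨fun ⟨T, hT⟩ => ?_, fun hI => ?_⟩
  · by_contra hI
    obtain rfl | ⟨j, hj, hj'⟩ := eq_univ_or_exists_consecutive_notMem hI
    · exact not_isTriangleTilingOn_univ hT
    · exact not_isTriangleTilingOn_of_consecutive_notMem hj hj' hT
  · obtain ⟨j, hj⟩ := card_eq_one.1 (by rw [card_compl, hI]; rfl : Iᶜ.card = 1)
    rw [← compl_compl I, hj]
    exact ⟨_, isTriangleTilingOn_compl_singleton j⟩
end
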